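/- arXiv:1903.05844 — 6 statements merged into one kernel-verified Lean document; each statement's English description precedes it below -/
import Mathlib

section
/- For every nonzero vector z ∈ ℝ^m, the tangent space T(zz^T) of the rank-one matrix zz^T satisfies ξ(T(zz^T)) ≤ 2‖z‖_∞/‖z‖₂, where ‖z‖_∞ = max_i |z_i| and ‖z‖₂ is the Euclidean norm. -/
open Matrix BigOperators
open scoped Classical

noncomputable section

/-- Spectral norm (largest singular value / ℓ²→ℓ² operator norm). -/
noncomputable def spec {n : Type*} [Fintype n] [DecidableEq n] (A : Matrix n n ℝ) : ℝ :=
  ‖Matrix.toEuclideanCLM (𝕜 := ℝ) A‖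

/-- Euclidean norm of a vector. -/
noncomputable def enorm {n : Type*} [Fintype n] (v : n → ℝ) : ℝ :=
  Real.sqrt (∑ i, v i ^ 2)

/-- Sup-norm of a vector (pi norm). -/
noncomputable def snorm {n : Type*} [Fintype n] (v : n → ℝ) : ℝ := ‖v‖

/-- Maximum absolute entry of a matrix. -/
noncomputable def entryMax {n : Type*} [Fintype n] (A : Matrix n n ℝ) : ℝ :=
  snorm (fun i => snorm (fun j => A i j))

/-- Membership of a matrix in the tangent space `T(zzᵀ) = {zxᵀ + yzᵀ : x, y}`. -/
def memT {n : Type*} (z : n → ℝ) (N : Matrix n n ℝ) : Prop :=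
  ∃ x y : n → ℝ, N = Matrix.of fun i j => z i * x j + y i * z j

/-- ξ(T(zzᵀ)) = max { max_{ij}|N_{ij}| : N ∈ T(zzᵀ), ‖N‖₂ ≤ 1 }. -/
noncomputable def xiT {n : Type*} [Fintype n] [DecidableEq n] (z : n → ℝ) : ℝ :=
  sSup {x | ∃ N : Matrix n n ℝ, memT z N ∧ spec N ≤ 1 ∧ x = entryMax N}

/-
With `P` the orthogonal projection onto the line `ℝ z`, every `N ∈ T(zzᵀ)` has vanishing
compression `(I - P) N (I - P)`, so `N = P N + (I - P) N P`. Pairing with the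
basis vectors `eᵢ, eⱼ` gives `|Nᵢⱼ| ≤ ‖N‖₂ (‖P eᵢ‖ + ‖P eⱼ‖) = ‖N‖₂ (|zᵢ| + |zⱼ|) / ‖z‖₂`.
-/

open scoped InnerProductSpace

section CompressionBound

variable {𝕜 E : Type*} [RCLike 𝕜] [NormedAddCommGroup E] [InnerProductSpace 𝕜 E]

theorem norm_inner_apply_le_of_inner_orthogonal_eq_zero (K : Submodule 𝕜 E)
    [K.HasOrthogonalProjection] {T : E →L[𝕜] E} (hT : ∀ a ∈ Kᗮ, ∀ b ∈ Kᗮ, ⟪a, T b⟫_𝕜 = 0)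
    (a b : E) :
    ‖⟪a, T b⟫_𝕜‖ ≤ ‖T‖ * (‖K.starProjection a‖ * ‖b‖ + ‖a‖ * ‖K.starProjection b‖) := by
  set P := K.starProjection
  set Q := Kᗮ.starProjection
  have hsplit : ⟪a, T b⟫_𝕜 = ⟪P a, T b⟫_𝕜 + ⟪Q a, T (P b)⟫_𝕜 := by
    have hQ : ⟪Q a, T (Q b)⟫_𝕜 = 0 :=
      hT _ (Kᗮ.starProjection_apply_mem a) _ (Kᗮ.starProjection_apply_mem b)
    calc ⟪a, T b⟫_𝕜 = ⟪P a + Q a, T b⟫_𝕜 := by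
          rw [K.starProjection_add_starProjection_orthogonal]
      _ = ⟪P a, T b⟫_𝕜 + ⟪Q a, T (P b + Q b)⟫_𝕜 := by
          rw [inner_add_left, K.starProjection_add_starProjection_orthogonal]
      _ = ⟪P a, T b⟫_𝕜 + ⟪Q a, T (P b)⟫_𝕜 := by
          rw [map_add, inner_add_right, hQ, add_zero]
  calc ‖⟪a, T b⟫_𝕜‖ ≤ ‖P a‖ * ‖T b‖ + ‖Q a‖ * ‖T (P b)‖ := by
        rw [hsplit]
        exact (norm_add_le _ _).trans (add_le_add (norm_inner_le_norm _ _) (norm_inner_le_norm _ _))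
    _ ≤ ‖P a‖ * (‖T‖ * ‖b‖) + ‖a‖ * (‖T‖ * ‖P b‖) := by
        gcongr
        · exact T.le_opNorm b
        · exact Kᗮ.norm_starProjection_apply_le a
        · exact T.le_opNorm (P b)
    _ = ‖T‖ * (‖P a‖ * ‖b‖ + ‖a‖ * ‖P b‖) := by ring

theorem norm_starProjection_singleton (v w : E) :
    ‖(𝕜 ∙ v).starProjection w‖ = ‖⟪v, w⟫_𝕜‖ / ‖v‖ := by
  rcases eq_or_ne v 0 with rfl | hv
  · simp
  have hv' : ‖v‖ ≠ 0 := norm_ne_zero_iff.mpr hv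
  rw [Submodule.starProjection_singleton, norm_smul, norm_div, RCLike.norm_ofReal,
    abs_of_nonneg (by positivity)]
  field_simp

end CompressionBound

section Coordinates

variable {n : Type*} [Fintype n]

theorem enorm_eq_norm_toLp (v : n → ℝ) : _root_.enorm v = ‖WithLp.toLp 2 v‖ := by
  simp [EuclideanSpace.norm_eq, _root_.enorm]

theorem abs_le_snorm (v : n → ℝ) (i : n) : |v i| ≤ snorm v :=
  norm_le_pi_norm v i

theorem entryMax_le {A : Matrix n n ℝ} {B : ℝ} (hB : 0 ≤ B) (h : ∀ i j, |A i j| ≤ B) :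
    entryMax A ≤ B :=
  (pi_norm_le_iff_of_nonneg hB).2 fun i =>
    (Real.norm_of_nonneg (norm_nonneg _)).trans_le ((pi_norm_le_iff_of_nonneg hB).2 (h i))

variable [DecidableEq n]

theorem apply_eq_inner_toEuclideanCLM (A : Matrix n n ℝ) (i j : n) :
    A i j = ⟪EuclideanSpace.single i 1, Matrix.toEuclideanCLM (𝕜 := ℝ) A
      (EuclideanSpace.single j 1)⟫_ℝ := by
  simp [EuclideanSpace.inner_single_left, ofLp_toEuclideanCLM]

theorem memT.inner_toEuclideanCLM_orthogonal_eq_zero {z : n → ℝ} {N : Matrix n n ℝ}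
    (hN : memT z N) :
    ∀ a ∈ (ℝ ∙ WithLp.toLp 2 z)ᗮ, ∀ b ∈ (ℝ ∙ WithLp.toLp 2 z)ᗮ,
      ⟪a, Matrix.toEuclideanCLM (𝕜 := ℝ) N b⟫_ℝ = 0 := by
  obtain ⟨x, y, rfl⟩ := hN
  intro a ha b hb
  rw [Submodule.mem_orthogonal_singleton_iff_inner_right, EuclideanSpace.inner_eq_star_dotProduct,
    star_trivial, WithLp.ofLp_toLp] at ha hb
  have hN : (of fun i j => z i * x j + y i * z j) = vecMulVec z x + vecMulVec y z := by
    ext i j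
    simp [vecMulVec]
  rw [inner_toEuclideanCLM, hN, add_mulVec, vecMulVec_mulVec, vecMulVec_mulVec]
  simp only [op_smul_eq_smul, dotProduct_add, dotProduct_smul, smul_eq_mul]
  rw [ha, dotProduct_comm z, hb]
  ring

theorem memT.abs_apply_le {z : n → ℝ} {N : Matrix n n ℝ} (hN : memT z N) (i j : n) :
    |N i j| ≤ spec N * ((|z i| + |z j|) / _root_.enorm z) := by
  have h := norm_inner_apply_le_of_inner_orthogonal_eq_zero _
    hN.inner_toEuclideanCLM_orthogonal_eq_zero (EuclideanSpace.single i 1)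
    (EuclideanSpace.single j 1)
  rw [apply_eq_inner_toEuclideanCLM N i j, ← Real.norm_eq_abs, enorm_eq_norm_toLp, add_div]
  simpa [spec, norm_starProjection_singleton, EuclideanSpace.inner_single_right] using h

end Coordinates

theorem xi_tangent_space_bound_general (m : ℕ) (z : Fin m → ℝ) :
    xiT z ≤ 2 * snorm z / _root_.enorm z := by
  have hB : 0 ≤ 2 * snorm z / _root_.enorm z := by
    unfold snorm _root_.enorm
    positivity
  refine Real.sSup_le ?_ hB
  rintro _ ⟨N, hN, hspec, rfl⟩
  refine entryMax_le hB fun i j => (hN.abs_apply_le i j).trans ?_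
  have hspec₀ : 0 ≤ spec N := norm_nonneg _
  have hz₀ : 0 ≤ _root_.enorm z := Real.sqrt_nonneg _
  have hzi := abs_le_snorm z i
  have hzj := abs_le_snorm z j
  calc spec N * ((|z i| + |z j|) / _root_.enorm z)
      ≤ 1 * ((snorm z + snorm z) / _root_.enorm z) := by gcongr
    _ = 2 * snorm z / _root_.enorm z := by ring

/-- For every nonzero `z ∈ ℝ^m`, `ξ(T(zzᵀ)) ≤ 2‖z‖_∞ / ‖z‖₂`. -/
theorem xi_tangent_space_bound (m : ℕ) (z : Fin m → ℝ) (hz : z ≠ 0) :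
    xiT z ≤ 2 * snorm z / _root_.enorm z :=
  xi_tangent_space_bound_general m z
end
end

section
/- (Source block decay effective rank bound.) Let 0 < τ ≤ 1, let K ∈ ℝ^{m×m} be a nonzero symmetric positive semidefinite block-diagonal matrix with blocks C_1, …, C_s of sizes m_1, …, m_s (so Σ_{j=1}^s m_j = m), and suppose tr(C_j) ≤ (1/2) · m_j^{τ/2} · λ_max(K) for every j. Then r_e(K) ≤ (1/2) s^{1−τ/2} m^{τ/2}. If in addition m ≥ 2 and s ≤ m^{τ/(2−τ)} / ((1+τ) log m)^{2/(2−τ)}, then r_e(K) ≤ (1/2) · m^τ / ((1+τ) log m). -/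
open Matrix BigOperators
open scoped Classical

noncomputable section

/-- Effective rank: `r_e(A) = tr(A)/‖A‖₂`. -/
noncomputable def effRank {n : Type*} [Fintype n] [DecidableEq n] (A : Matrix n n ℝ) : ℝ :=
  A.trace / spec A

/-- **source block decay effective rank bound.** For a nonzero positive
semidefinite block-diagonal matrix `K` with blocks `C_1, …, C_s` of sizes `m_1, …, m_s` summing
to `m`, if `tr(C_j) ≤ ½ m_j^{τ/2} λ_max(K)` for every `j`, then
`r_e(K) ≤ ½ s^{1−τ/2} m^{τ/2}`; if moreover `m ≥ 2` and
`s ≤ m^{τ/(2−τ)}/((1+τ) log m)^{2/(2−τ)}`, then `r_e(K) ≤ ½ m^τ/((1+τ) log m)`. -/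
theorem sbd_effective_rank_bound (τ : ℝ) (hτ0 : 0 < τ) (hτ1 : τ ≤ 1)
    (s : ℕ) (sizes : Fin s → ℕ)
    (C : ∀ j, Matrix (Fin (sizes j)) (Fin (sizes j)) ℝ)
    (m : ℕ) (hm : ∑ j, sizes j = m)
    (hPSD : (Matrix.blockDiagonal' C).PosSemidef)
    (hK0 : Matrix.blockDiagonal' C ≠ 0)
    (htr : ∀ j, (C j).trace ≤
      (1 / 2) * (sizes j : ℝ) ^ (τ / 2) * spec (Matrix.blockDiagonal' C)) :
    effRank (Matrix.blockDiagonal' C) ≤ (1 / 2) * (s : ℝ) ^ (1 - τ / 2) * (m : ℝ) ^ (τ / 2) ∧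
    (2 ≤ m →
      (s : ℝ) ≤ (m : ℝ) ^ (τ / (2 - τ)) / ((1 + τ) * Real.log m) ^ (2 / (2 - τ)) →
      effRank (Matrix.blockDiagonal' C) ≤ (1 / 2) * (m : ℝ) ^ τ / ((1 + τ) * Real.log m)) := by
  classical
  set K := Matrix.blockDiagonal' C with hKdef
  -- nonempty index type
  have hne : Nonempty ((j : Fin s) × Fin (sizes j)) := by
    by_contra h
    exact hK0 (Matrix.ext fun i _ => absurd ⟨i⟩ h)
  obtain ⟨⟨j0, k0⟩⟩ := hne
  have hs_pos : 0 < s := j0.pos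
  have hm_pos : 0 < m := by
    rw [← hm]
    exact lt_of_lt_of_le k0.pos
      (Finset.single_le_sum (fun _ _ => Nat.zero_le _) (Finset.mem_univ j0))
  have hspec : 0 < spec K := by
    rw [spec, norm_pos_iff]
    intro h
    apply hK0
    have h2 : Matrix.toEuclideanCLM (𝕜 := ℝ) K = Matrix.toEuclideanCLM (𝕜 := ℝ) (0 : Matrix ((i : Fin s) × Fin (sizes i)) ((i : Fin s) × Fin (sizes i)) ℝ) := by
      rw [h, map_zero]
    exact (Matrix.toEuclideanCLM (𝕜 := ℝ) (n := (i : Fin s) × Fin (sizes i))).injective h2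
  set q : ℝ := τ / 2 with hq
  have hq0 : 0 < q := by positivity
  have hq1 : q ≤ 1 / 2 := by rw [hq]; linarith
  -- key sum bound : ∑ (sizes j)^q ≤ s^(1-q) * m^q
  have hsum : ∑ j, (sizes j : ℝ) ^ q ≤ (s : ℝ) ^ (1 - q) * (m : ℝ) ^ q := by
    have hsR : (0 : ℝ) < s := by exact_mod_cast hs_pos
    have hmean := Real.arith_mean_le_rpow_mean (Finset.univ)
      (fun _ : Fin s => 1 / (s : ℝ)) (fun j => (sizes j : ℝ) ^ q)
      (fun i _ => by positivity)
      (by rw [Finset.sum_const, Finset.card_univ, Fintype.card_fin, nsmul_eq_mul]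
          field_simp)
      (fun i _ => by positivity) (p := 1 / q)
      (by rw [le_div_iff₀ hq0, one_mul]; linarith)
    have hzp : ∀ i : Fin s, ((sizes i : ℝ) ^ q) ^ (1 / q) = (sizes i : ℝ) := by
      intro i
      rw [← Real.rpow_mul (Nat.cast_nonneg _), mul_one_div, div_self (ne_of_gt hq0),
        Real.rpow_one]
    simp only [hzp] at hmean
    rw [one_div_one_div] at hmean
    have h1 : ∑ i : Fin s, 1 / (s : ℝ) * (sizes i : ℝ) ^ q
        = (1 / (s : ℝ)) * ∑ i, (sizes i : ℝ) ^ q := by rw [← Finset.mul_sum]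
    have h2 : ∑ i : Fin s, 1 / (s : ℝ) * (sizes i : ℝ) = (m : ℝ) / s := by
      rw [← Finset.mul_sum, ← Nat.cast_sum, hm]; ring
    rw [h1, h2] at hmean
    have := mul_le_mul_of_nonneg_left hmean (le_of_lt hsR)
    calc ∑ i, (sizes i : ℝ) ^ q
        = (s : ℝ) * ((1 / (s : ℝ)) * ∑ i, (sizes i : ℝ) ^ q) := by
          field_simp
      _ ≤ (s : ℝ) * ((m : ℝ) / s) ^ q := this
      _ = (s : ℝ) ^ (1 - q) * (m : ℝ) ^ q := by
          rw [Real.div_rpow (Nat.cast_nonneg _) (le_of_lt hsR),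
            Real.rpow_sub hsR, Real.rpow_one]
          ring
  -- trace bound
  have htrace : K.trace ≤ (1 / 2) * ((s : ℝ) ^ (1 - q) * (m : ℝ) ^ q) * spec K := by
    rw [hKdef, Matrix.trace_blockDiagonal']
    calc ∑ j, (C j).trace ≤ ∑ j, (1 / 2) * (sizes j : ℝ) ^ q * spec K :=
          Finset.sum_le_sum (fun j _ => htr j)
      _ = (1 / 2) * (∑ j, (sizes j : ℝ) ^ q) * spec K := by
          simp [Finset.mul_sum, Finset.sum_mul, mul_assoc]
      _ ≤ (1 / 2) * ((s : ℝ) ^ (1 - q) * (m : ℝ) ^ q) * spec K := by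
          apply mul_le_mul_of_nonneg_right _ (le_of_lt hspec)
          · apply mul_le_mul_of_nonneg_left hsum; norm_num
  have hfirst : effRank K ≤ (1 / 2) * (s : ℝ) ^ (1 - q) * (m : ℝ) ^ q := by
    rw [effRank, div_le_iff₀ hspec]
    calc K.trace ≤ (1 / 2) * ((s : ℝ) ^ (1 - q) * (m : ℝ) ^ q) * spec K := htrace
      _ = (1 / 2) * (s : ℝ) ^ (1 - q) * (m : ℝ) ^ q * spec K := by ring
  refine ⟨hfirst, fun hm2 hs => ?_⟩
  have hmR : (2 : ℝ) ≤ (m : ℝ) := by exact_mod_cast hm2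
  have hlog : 0 < Real.log m := Real.log_pos (by linarith)
  have hL : 0 < (1 + τ) * Real.log m := by positivity
  have h2τ : (0 : ℝ) < 2 - τ := by linarith
  -- s^(1-q) ≤ m^q / L
  have hspow : (s : ℝ) ^ (1 - q) ≤ (m : ℝ) ^ q / ((1 + τ) * Real.log m) := by
    have hsnn : (0 : ℝ) ≤ s := Nat.cast_nonneg _
    have := Real.rpow_le_rpow hsnn hs (by positivity : (0 : ℝ) ≤ (2 - τ) / 2)
    have hnum : ((m : ℝ) ^ (τ / (2 - τ))) ^ ((2 - τ) / 2) = (m : ℝ) ^ q := by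
      rw [← Real.rpow_mul (Nat.cast_nonneg _)]
      rw [hq]; congr 1; field_simp
    have hden : (((1 + τ) * Real.log m) ^ (2 / (2 - τ))) ^ ((2 - τ) / 2)
        = (1 + τ) * Real.log m := by
      rw [← Real.rpow_mul (le_of_lt hL)]
      rw [div_mul_div_comm, mul_comm (2 : ℝ), div_self (by positivity), Real.rpow_one]
    rw [Real.div_rpow (by positivity) (by positivity), hnum, hden] at this
    have heq : (1 : ℝ) - q = (2 - τ) / 2 := by rw [hq]; ring
    rw [heq]
    exact this
  have hmq : (m : ℝ) ^ q * (m : ℝ) ^ q = (m : ℝ) ^ τ := by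
    rw [← Real.rpow_add (by linarith : (0 : ℝ) < m), hq]; ring_nf
  calc effRank K ≤ (1 / 2) * (s : ℝ) ^ (1 - q) * (m : ℝ) ^ q := hfirst
    _ ≤ (1 / 2) * ((m : ℝ) ^ q / ((1 + τ) * Real.log m)) * (m : ℝ) ^ q := by
        apply mul_le_mul_of_nonneg_right _ (by positivity)
        apply mul_le_mul_of_nonneg_left hspow; norm_num
    _ = (1 / 2) * (m : ℝ) ^ τ / ((1 + τ) * Real.log m) := by
        rw [← hmq]; ring
end
end

section
/- (Strong source block effective rank bound.) Let K ∈ ℝ^{m×m} be a nonzero symmetric positive semidefinite block-diagonal matrix with blocks C_1, …, C_s, each of size at most d. Suppose there is an index i such that tr(C_i) ≥ Σ_{j≠i} tr(C_j) and λ_max(C_i) ≥ λ_max(C_j) for all j. Then the effective rank satisfies r_e(K) ≤ 2d. -/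
open Matrix BigOperators
open scoped Classical

noncomputable section

/-! Diagonal entries and diagonal blocks of `K` are compressions `Pᴴ K Q` by coordinate
embeddings `P`, `Q` of norm at most one, so their norms are at most `‖K‖₂`. Hence
`tr K ≤ 2 tr C_i ≤ 2 · size(C_i) · ‖C_i‖₂ ≤ 2 d ‖K‖₂`. -/

open scoped Matrix.Norms.L2Operator

namespace Matrix

variable {𝕜 : Type*} [RCLike 𝕜] {k l m n : Type*} [Fintype k] [Fintype l] [Fintype m] [Fintype n]

lemma l2_opNorm_one_submatrix_le [DecidableEq m] [DecidableEq n] {e : n → m}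
    (he : Function.Injective e) : ‖(1 : Matrix m m 𝕜).submatrix id e‖ ≤ 1 := by
  set P := (1 : Matrix m m 𝕜).submatrix id e
  have hPP : ‖P‖ * ‖P‖ = ‖(1 : Matrix n n 𝕜)‖ := by
    rw [← l2_opNorm_conjTranspose_mul_self]
    congr 1; ext; simp [P, mul_apply, one_apply, he.eq_iff]
  have h1 : ‖(1 : Matrix n n 𝕜)‖ ≤ 1 := by
    rw [← diagonal_one, l2_opNorm_diagonal]
    exact (pi_norm_le_iff_of_nonneg zero_le_one).2 fun _ => by simp
  nlinarith [norm_nonneg P]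

lemma l2_opNorm_submatrix_le [DecidableEq m] [DecidableEq n]
    (A : Matrix m n 𝕜) {e₁ : l → m} {e₂ : k → n} (he₁ : Function.Injective e₁)
    (he₂ : Function.Injective e₂) : ‖A.submatrix e₁ e₂‖ ≤ ‖A‖ := by
  set P₁ := (1 : Matrix m m 𝕜).submatrix id e₁
  set P₂ := (1 : Matrix n n 𝕜).submatrix id e₂
  have hcompress : A.submatrix e₁ e₂ = P₁ᴴ * A * P₂ := by
    ext; simp [P₁, P₂, mul_apply, one_apply]
  calc ‖A.submatrix e₁ e₂‖ ≤ ‖P₁ᴴ‖ * ‖A‖ * ‖P₂‖ := by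
        grw [hcompress, l2_opNorm_mul, l2_opNorm_mul]
    _ ≤ 1 * ‖A‖ * 1 := by
        rw [l2_opNorm_conjTranspose]
        gcongr
        exacts [l2_opNorm_one_submatrix_le he₁, l2_opNorm_one_submatrix_le he₂]
    _ = ‖A‖ := by ring

lemma norm_entry_le_l2_opNorm [DecidableEq m] [DecidableEq n] (A : Matrix m n 𝕜) (i : m) (j : n) :
    ‖A i j‖ ≤ ‖A‖ := by
  calc ‖A i j‖ = ‖(diagonal fun _ : Unit => A i j)‖ := by
        rw [l2_opNorm_diagonal, pi_norm_const]
    _ = ‖A.submatrix (fun _ : Unit => i) (fun _ => j)‖ := by congr 1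
    _ ≤ ‖A‖ := l2_opNorm_submatrix_le A (fun _ _ _ => rfl) fun _ _ _ => rfl

end Matrix

lemma trace_le_card_mul_spec {n : Type*} [Fintype n] [DecidableEq n] (A : Matrix n n ℝ) :
    A.trace ≤ Fintype.card n * spec A :=
  calc A.trace = ∑ k, A k k := rfl
    _ ≤ ∑ _k : n, spec A :=
      Finset.sum_le_sum fun k _ => (Real.le_norm_self _).trans (norm_entry_le_l2_opNorm A k k)
    _ = Fintype.card n * spec A := by simp

lemma spec_le_spec_blockDiagonal' {ι : Type*} [Fintype ι] [DecidableEq ι] {o : ι → Type*}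
    [∀ i, Fintype (o i)] [∀ i, DecidableEq (o i)] (C : ∀ i, Matrix (o i) (o i) ℝ) (i : ι) :
    spec (C i) ≤ spec (blockDiagonal' C) := by
  have hblock : (blockDiagonal' C).submatrix (Sigma.mk i) (Sigma.mk i) = C i := by
    ext; simp [blockDiagonal'_apply_eq]
  rw [← hblock]
  exact l2_opNorm_submatrix_le _ sigma_mk_injective sigma_mk_injective

theorem ssb_effective_rank_bound_general (s d : ℕ) (sizes : Fin s → ℕ)
    (hsizes : ∀ j, sizes j ≤ d)
    (C : ∀ j, Matrix (Fin (sizes j)) (Fin (sizes j)) ℝ)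
    (i : Fin s)
    (htr : ∑ j ∈ Finset.univ.erase i, (C j).trace ≤ (C i).trace) :
    effRank (Matrix.blockDiagonal' C) ≤ 2 * d := by
  set K := blockDiagonal' C
  have hK : K.trace ≤ 2 * (C i).trace := by
    rw [trace_blockDiagonal', ← Finset.add_sum_erase _ _ (Finset.mem_univ i)]
    linarith
  have hCi : (C i).trace ≤ d * spec K :=
    calc (C i).trace ≤ sizes i * spec (C i) := by simpa using trace_le_card_mul_spec (C i)
      _ ≤ d * spec K := by
        gcongr
        exacts [norm_nonneg _, hsizes i, spec_le_spec_blockDiagonal' C i]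
  exact div_le_of_le_mul₀ (norm_nonneg _) (by positivity) (by linarith)

/-- **strong source block effective rank bound.** For a nonzero positive
semidefinite block-diagonal matrix `K` with blocks `C_1, …, C_s`, each of size at most `d`,
if some block `C_i` satisfies `tr(C_i) ≥ Σ_{j≠i} tr(C_j)` and `λ_max(C_i) ≥ λ_max(C_j)` for all
`j`, then `r_e(K) ≤ 2d`. -/
theorem ssb_effective_rank_bound (s d : ℕ) (sizes : Fin s → ℕ)
    (hsizes : ∀ j, sizes j ≤ d)
    (C : ∀ j, Matrix (Fin (sizes j)) (Fin (sizes j)) ℝ)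
    (hPSD : (Matrix.blockDiagonal' C).PosSemidef)
    (hK0 : Matrix.blockDiagonal' C ≠ 0)
    (i : Fin s)
    (htr : ∑ j ∈ Finset.univ.erase i, (C j).trace ≤ (C i).trace)
    (hmax : ∀ j, spec (C j) ≤ spec (C i)) :
    effRank (Matrix.blockDiagonal' C) ≤ 2 * d :=
  ssb_effective_rank_bound_general s d sizes hsizes C i htr
end
end

section
/- (Theorem 2, information-theoretic lower bound.) Fix m ≥ 3, θ > 0, δ ∈ (0,1), and n ≥ 1. Let 𝒢_ws = {G^{st} : 1 ≤ s < t ≤ m} be the class of M = m(m−1)/2 graphs described below, each with associated distribution f_{G^{st}} on {−1,1}^{m+1}, and for each graph let P_{G^{st}} be the marginal distribution of (λ_1,…,λ_m). Suppose n < (1−δ) · log(m(m−1)/2) / (2θ(1 − 4(e^{4θ}+3)^{−1} − tanh²(θ))). Then for every decoding procedure φ : ({−1,1}^m)^n → 𝒢_ws, the maximum probability of error max_{G ∈ 𝒢_ws} P_{G}^{⊗n}(φ(X_1,…,X_n) ≠ G) is at least δ − 1/log M. -/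
open BigOperators symmDiff

noncomputable section

/-- The `±1` spin value of a Boolean configuration entry. -/
def pm (b : Bool) : ℝ := if b then 1 else -1

/-- Energy (log unnormalized weight) of a full configuration `σ` of the sources and the latent
label under the graph `G^{st}`: edges `(λ_i, Y)` for all `i` and the single edge `(λ_s, λ_t)`,
all with parameter `θ`. -/
def energy (m : ℕ) (θ : ℝ) (s t : Fin m) (σ : Fin m ⊕ Unit → Bool) : ℝ :=
  θ * ((∑ i : Fin m, pm (σ (Sum.inl i)) * pm (σ (Sum.inr ()))) +
    pm (σ (Sum.inl s)) * pm (σ (Sum.inl t)))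

/-- Partition function of the Ising model `f_{G^{st}}`. -/
def partition (m : ℕ) (θ : ℝ) (s t : Fin m) : ℝ :=
  ∑ σ : Fin m ⊕ Unit → Bool, Real.exp (energy m θ s t σ)

/-- The Ising probability mass function `f_{G^{st}}` on full configurations `{−1,1}^{m+1}`. -/
def isingPMF (m : ℕ) (θ : ℝ) (s t : Fin m) (σ : Fin m ⊕ Unit → Bool) : ℝ :=
  Real.exp (energy m θ s t σ) / partition m θ s t

/-- Marginal distribution `P_{G^{st}}` of the observed sources `(λ_1, …, λ_m)`. -/
def margPMF (m : ℕ) (θ : ℝ) (s t : Fin m) (x : Fin m → Bool) : ℝ :=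
  ∑ y : Bool, isingPMF m θ s t (fun i => Sum.elim x (fun _ => y) i)

/-- Expectation `E_{G^{st}}[λ_a λ_b]`. -/
def isingCorr (m : ℕ) (θ : ℝ) (s t a b : Fin m) : ℝ :=
  ∑ σ : Fin m ⊕ Unit → Bool,
    isingPMF m θ s t σ * (pm (σ (Sum.inl a)) * pm (σ (Sum.inl b)))

/-- Kullback–Leibler divergence between two pmfs on `{−1,1}^m`. -/
def klDiv (m : ℕ) (P Q : (Fin m → Bool) → ℝ) : ℝ :=
  ∑ x : Fin m → Bool, P x * Real.log (P x / Q x)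

-- auxiliary
lemma pm_mul_self (b : Bool) : pm b * pm b = 1 := by cases b <;> simp [pm]

lemma pm_sq (b : Bool) : pm b ^ 2 = 1 := by cases b <;> simp [pm]

lemma sum_exp_pm (θ : ℝ) (y : Bool) :
    ∑ b : Bool, Real.exp (θ * (pm b * pm y)) = Real.exp θ + Real.exp (-θ) := by
  cases y <;> simp [pm] <;> ring_nf <;> rw [add_comm]

lemma sum_pm_exp (θ : ℝ) (y : Bool) :
    ∑ b : Bool, pm b * Real.exp (θ * (pm b * pm y))
      = pm y * (Real.exp θ - Real.exp (-θ)) := by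
  cases y <;> simp [pm] <;> ring_nf

lemma master (m : ℕ) (θ : ℝ) (y : Bool) (M : Finset (Fin m)) :
    ∑ x : Fin m → Bool, ((∏ i, Real.exp (θ * (pm (x i) * pm y))) * ∏ i ∈ M, pm (x i))
      = (pm y * (Real.exp θ - Real.exp (-θ))) ^ M.card
          * (Real.exp θ + Real.exp (-θ)) ^ (m - M.card) := by
  have h1 : ∀ x : Fin m → Bool,
      ((∏ i, Real.exp (θ * (pm (x i) * pm y))) * ∏ i ∈ M, pm (x i))
        = ∏ i, (Real.exp (θ * (pm (x i) * pm y)) * (if i ∈ M then pm (x i) else 1)) := by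
    intro x
    rw [Finset.prod_mul_distrib]
    congr 1
    rw [← Finset.prod_filter]
    congr 1
    simp [Finset.filter_mem_eq_inter]
  simp_rw [h1]
  rw [← Fintype.prod_sum (fun i b => Real.exp (θ * (pm b * pm y)) * (if i ∈ M then pm b else 1))]
  have h2 : ∀ i : Fin m, (∑ b : Bool, Real.exp (θ * (pm b * pm y)) * (if i ∈ M then pm b else 1))
      = if i ∈ M then pm y * (Real.exp θ - Real.exp (-θ)) else Real.exp θ + Real.exp (-θ) := by
    intro i
    by_cases h : i ∈ M <;> simp [h, ← sum_pm_exp θ y, ← sum_exp_pm θ y, mul_comm]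
  simp_rw [h2]
  rw [← Finset.prod_mul_prod_compl M]
  rw [Finset.prod_congr rfl (fun i hi => if_pos hi),
    Finset.prod_congr rfl (fun i (hi : i ∈ Mᶜ) => if_neg (by simpa using hi)),
    Finset.prod_const, Finset.prod_const, Finset.card_compl, Fintype.card_fin]

lemma prod_pm_mul_prod_pm {m : ℕ} (x : Fin m → Bool) (M N : Finset (Fin m)) :
    (∏ i ∈ M, pm (x i)) * ∏ i ∈ N, pm (x i) = ∏ i ∈ M ∆ N, pm (x i) := by
  classical
  have h1 : (∏ i ∈ M, pm (x i)) = (∏ i ∈ M \ N, pm (x i)) * ∏ i ∈ M ∩ N, pm (x i) := by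
    rw [← Finset.prod_union (Finset.disjoint_sdiff_inter M N), Finset.sdiff_union_inter]
  have h2 : (∏ i ∈ N, pm (x i)) = (∏ i ∈ N \ M, pm (x i)) * ∏ i ∈ N ∩ M, pm (x i) := by
    rw [← Finset.prod_union (Finset.disjoint_sdiff_inter N M), Finset.sdiff_union_inter]
  have h3 : (∏ i ∈ M ∩ N, pm (x i)) * (∏ i ∈ N ∩ M, pm (x i)) = 1 := by
    rw [Finset.inter_comm, ← Finset.prod_mul_distrib]
    exact Finset.prod_eq_one (fun i _ => pm_mul_self _)
  have h4 : M ∆ N = (M \ N) ∪ (N \ M) := by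
    rw [symmDiff_def]; rfl
  rw [h1, h2, h4, Finset.prod_union disjoint_sdiff_sdiff, mul_mul_mul_comm, h3, mul_one]

lemma exp_energy_elim (m : ℕ) (θ : ℝ) (s t : Fin m) (x : Fin m → Bool) (y : Bool) :
    Real.exp (energy m θ s t (Sum.elim x (fun _ => y)))
      = (∏ i, Real.exp (θ * (pm (x i) * pm y))) * Real.exp (θ * (pm (x s) * pm (x t))) := by
  rw [energy]
  simp only [Sum.elim_inl, Sum.elim_inr]
  rw [mul_add, Real.exp_add, Finset.mul_sum, Real.exp_sum]

lemma exp_pm_pair (θ : ℝ) (u v : Bool) :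
    Real.exp (θ * (pm u * pm v))
      = ((Real.exp θ + Real.exp (-θ)) + pm u * pm v * (Real.exp θ - Real.exp (-θ))) / 2 := by
  cases u <;> cases v <;> simp [pm] <;> ring

def Aex (θ : ℝ) : ℝ := Real.exp θ + Real.exp (-θ)
def Sex (θ : ℝ) : ℝ := Real.exp θ - Real.exp (-θ)

lemma key (m : ℕ) (θ : ℝ) {s t : Fin m} (hst : s ≠ t) (y : Bool) (M : Finset (Fin m)) :
    ∑ x : Fin m → Bool, Real.exp (energy m θ s t (Sum.elim x (fun _ => y))) * ∏ i ∈ M, pm (x i)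
      = ((pm y * Sex θ) ^ M.card * Aex θ ^ (m - M.card) * Aex θ
         + (pm y * Sex θ) ^ ((M ∆ ({s,t} : Finset (Fin m))).card)
             * Aex θ ^ (m - (M ∆ ({s,t} : Finset (Fin m))).card) * Sex θ) / 2 := by
  have step : ∀ x : Fin m → Bool,
      Real.exp (energy m θ s t (Sum.elim x (fun _ => y))) * ∏ i ∈ M, pm (x i)
        = ((∏ i, Real.exp (θ * (pm (x i) * pm y))) * ∏ i ∈ M, pm (x i)) * (Aex θ / 2)
          + ((∏ i, Real.exp (θ * (pm (x i) * pm y)))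
              * ∏ i ∈ M ∆ ({s,t} : Finset (Fin m)), pm (x i)) * (Sex θ / 2) := by
    intro x
    rw [exp_energy_elim, exp_pm_pair, ← prod_pm_mul_prod_pm x M {s,t},
      ← Finset.prod_pair hst (f := fun i => pm (x i)), Aex, Sex]
    ring
  simp_rw [step]
  rw [Finset.sum_add_distrib, ← Finset.sum_mul, ← Finset.sum_mul, master, master]
  simp only [Aex, Sex]
  ring

def srcW (m : ℕ) (θ : ℝ) (s t : Fin m) (x : Fin m → Bool) : ℝ :=
  ∑ y : Bool, Real.exp (energy m θ s t (Sum.elim x (fun _ => y)))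

lemma sum_srcW_mul (m : ℕ) (θ : ℝ) {s t : Fin m} (hst : s ≠ t) (M : Finset (Fin m)) :
    ∑ x : Fin m → Bool, srcW m θ s t x * ∏ i ∈ M, pm (x i)
      = ∑ y : Bool, ((pm y * Sex θ) ^ M.card * Aex θ ^ (m - M.card) * Aex θ
         + (pm y * Sex θ) ^ ((M ∆ ({s,t} : Finset (Fin m))).card)
             * Aex θ ^ (m - (M ∆ ({s,t} : Finset (Fin m))).card) * Sex θ) / 2 := by
  simp_rw [srcW, Finset.sum_mul]
  rw [Finset.sum_comm]
  exact Finset.sum_congr rfl (fun y _ => key m θ hst y M)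

lemma pm_pow_even (y : Bool) (r : ℕ) : pm y ^ (2 * r) = 1 := by
  rw [pow_mul]; cases y <;> simp [pm]

lemma sum_srcW (m : ℕ) (θ : ℝ) {s t : Fin m} (hst : s ≠ t) :
    ∑ x : Fin m → Bool, srcW m θ s t x
      = Aex θ ^ m * Aex θ + Sex θ ^ 2 * Aex θ ^ (m - 2) * Sex θ := by
  have := sum_srcW_mul m θ hst ∅
  simp only [Finset.prod_empty, mul_one, Finset.card_empty, pow_zero] at this
  rw [this]
  have hd : (∅ : Finset (Fin m)) ∆ ({s,t} : Finset (Fin m)) = {s,t} := bot_symmDiff _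
  rw [hd, Finset.card_pair hst]
  have h2 : ∀ y : Bool, (pm y * Sex θ) ^ 2 = Sex θ ^ 2 := by
    intro y; rw [mul_pow, pm_sq, one_mul]
  simp [h2, Nat.sub_zero]
  ring

lemma sum_srcW_corr (m : ℕ) (θ : ℝ) {s t a b : Fin m} (hst : s ≠ t) (hab : a ≠ b)
    (r : ℕ) (hD : (({a,b} : Finset (Fin m)) ∆ ({s,t} : Finset (Fin m))).card = 2 * r) :
    ∑ x : Fin m → Bool, srcW m θ s t x * (pm (x a) * pm (x b))
      = Sex θ ^ 2 * Aex θ ^ (m - 2) * Aex θ + Sex θ ^ (2 * r) * Aex θ ^ (m - 2 * r) * Sex θ := by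
  have hprod : ∀ x : Fin m → Bool, pm (x a) * pm (x b) = ∏ i ∈ ({a,b} : Finset (Fin m)), pm (x i) :=
    fun x => (Finset.prod_pair hab (f := fun i => pm (x i))).symm
  simp_rw [hprod]
  rw [sum_srcW_mul m θ hst, Finset.card_pair hab, hD]
  have h2 : ∀ y : Bool, (pm y * Sex θ) ^ 2 = Sex θ ^ 2 := by
    intro y; rw [mul_pow, pm_sq, one_mul]
  have h2r : ∀ y : Bool, (pm y * Sex θ) ^ (2 * r) = Sex θ ^ (2 * r) := by
    intro y; rw [mul_pow, pm_pow_even, one_mul]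
  simp [h2, h2r]
  ring

def elimEquiv (m : ℕ) : ((Fin m → Bool) × Bool) ≃ (Fin m ⊕ Unit → Bool) where
  toFun p := Sum.elim p.1 (fun _ => p.2)
  invFun σ := (fun i => σ (Sum.inl i), σ (Sum.inr ()))
  left_inv p := rfl
  right_inv σ := by
    funext i
    cases i with
    | inl a => rfl
    | inr u => cases u; rfl

lemma partition_eq_sum_srcW (m : ℕ) (θ : ℝ) (s t : Fin m) :
    partition m θ s t = ∑ x : Fin m → Bool, srcW m θ s t x := by
  rw [partition, ← Equiv.sum_comp (elimEquiv m) (fun σ => Real.exp (energy m θ s t σ)),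
    Fintype.sum_prod_type]
  rfl

lemma gg_pos (m : ℕ) (θ : ℝ) (x : Fin m → Bool) :
    0 < ∑ y : Bool, ∏ i, Real.exp (θ * (pm (x i) * pm y)) := by
  apply Finset.sum_pos (fun y _ => Finset.prod_pos (fun i _ => Real.exp_pos _))
  exact Finset.univ_nonempty

lemma srcW_factor (m : ℕ) (θ : ℝ) (s t : Fin m) (x : Fin m → Bool) :
    srcW m θ s t x
      = (∑ y : Bool, ∏ i, Real.exp (θ * (pm (x i) * pm y)))
          * Real.exp (θ * (pm (x s) * pm (x t))) := by
  rw [srcW, Finset.sum_mul]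
  exact Finset.sum_congr rfl (fun y _ => exp_energy_elim m θ s t x y)

lemma srcW_pos (m : ℕ) (θ : ℝ) (s t : Fin m) (x : Fin m → Bool) :
    0 < srcW m θ s t x := by
  rw [srcW_factor]
  exact mul_pos (gg_pos m θ x) (Real.exp_pos _)

lemma partition_pos (m : ℕ) (θ : ℝ) (s t : Fin m) : 0 < partition m θ s t := by
  rw [partition_eq_sum_srcW]
  exact Finset.sum_pos (fun x _ => srcW_pos m θ s t x) Finset.univ_nonempty

lemma margPMF_eq (m : ℕ) (θ : ℝ) (s t : Fin m) (x : Fin m → Bool) :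
    margPMF m θ s t x = srcW m θ s t x / partition m θ s t := by
  rw [margPMF, srcW, Finset.sum_div]
  rfl

lemma margPMF_pos (m : ℕ) (θ : ℝ) (s t : Fin m) (x : Fin m → Bool) :
    0 < margPMF m θ s t x := by
  rw [margPMF_eq]
  exact div_pos (srcW_pos m θ s t x) (partition_pos m θ s t)

lemma sum_margPMF (m : ℕ) (θ : ℝ) (s t : Fin m) :
    ∑ x : Fin m → Bool, margPMF m θ s t x = 1 := by
  simp_rw [margPMF_eq]
  rw [← Finset.sum_div, ← partition_eq_sum_srcW, div_self (partition_pos m θ s t).ne']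

lemma partition_closed (m : ℕ) (θ : ℝ) {s t : Fin m} (hst : s ≠ t) :
    partition m θ s t = Aex θ ^ m * Aex θ + Sex θ ^ 2 * Aex θ ^ (m - 2) * Sex θ := by
  rw [partition_eq_sum_srcW, sum_srcW m θ hst]

lemma log_ratio (m : ℕ) (θ : ℝ) {s t s' t' : Fin m} (hst : s ≠ t) (hst' : s' ≠ t')
    (x : Fin m → Bool) :
    Real.log (margPMF m θ s t x / margPMF m θ s' t' x)
      = θ * (pm (x s) * pm (x t)) - θ * (pm (x s') * pm (x t')) := by
  have hZ : partition m θ s t = partition m θ s' t' := by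
    rw [partition_closed m θ hst, partition_closed m θ hst']
  have hratio : margPMF m θ s t x / margPMF m θ s' t' x
      = Real.exp (θ * (pm (x s) * pm (x t))) / Real.exp (θ * (pm (x s') * pm (x t'))) := by
    rw [margPMF_eq, margPMF_eq, srcW_factor, srcW_factor, hZ]
    have h1 := (gg_pos m θ x).ne'
    have h2 := (partition_pos m θ s' t').ne'
    have h3 := (Real.exp_pos (θ * (pm (x s') * pm (x t')))).ne'
    field_simp
  rw [hratio, ← Real.exp_sub, Real.log_exp]

def c0 (θ : ℝ) : ℝ :=
  Sex θ * (Aex θ - Sex θ) * (Aex θ ^ 2 + Sex θ ^ 2)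
    / (Aex θ ^ 2 * (Aex θ ^ 2 - Aex θ * Sex θ + Sex θ ^ 2))

lemma Sex_pos {θ : ℝ} (hθ : 0 < θ) : 0 < Sex θ := by
  rw [Sex, sub_pos]
  exact Real.exp_lt_exp.2 (by linarith)

lemma Aex_pos (θ : ℝ) : 0 < Aex θ := by
  have := Real.exp_pos θ; have := Real.exp_pos (-θ); rw [Aex]; linarith

lemma Sex_lt_Aex (θ : ℝ) : Sex θ < Aex θ := by
  have := Real.exp_pos (-θ); rw [Sex, Aex]; linarith

lemma quad_pos {θ : ℝ} (hθ : 0 < θ) : 0 < Aex θ ^ 2 - Aex θ * Sex θ + Sex θ ^ 2 := by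
  have h1 := Sex_pos hθ; have h2 := Sex_lt_Aex θ
  nlinarith

lemma c0_pos {θ : ℝ} (hθ : 0 < θ) : 0 < c0 θ := by
  have h1 := Sex_pos hθ; have h2 := Sex_lt_Aex θ; have h3 := Aex_pos θ
  have h4 := quad_pos hθ
  apply div_pos
  · exact mul_pos (mul_pos h1 (by linarith)) (by positivity)
  · positivity

lemma cube_pos {θ : ℝ} (hθ : 0 < θ) : 0 < Aex θ ^ 3 + Sex θ ^ 3 := by
  have h1 := Sex_pos hθ; have h3 := Aex_pos θ
  positivity

lemma card_symmDiff' {ι : Type*} [DecidableEq ι] (U V : Finset ι) :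
    (U ∆ V).card + 2 * (U ∩ V).card = U.card + V.card := by
  have h0 : U ∆ V = (U ∪ V) \ (U ∩ V) := symmDiff_eq_sup_sdiff_inf U V
  have h1 := Finset.card_union_add_card_inter U V
  have h2 : (U ∩ V).card ≤ (U ∪ V).card :=
    Finset.card_le_card (Finset.inter_subset_union)
  rw [h0, Finset.card_sdiff_of_subset (Finset.inter_subset_union)]
  omega

lemma alg_share {A S p : ℝ} (hS : 0 < S) (hSA : S < A) (hp : 0 < p) :
    p * S * (A ^ 2 - S ^ 2) / (p * (A ^ 3 + S ^ 3))
      ≤ S * (A - S) * (A ^ 2 + S ^ 2) / (A ^ 2 * (A ^ 2 - A * S + S ^ 2)) := by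
  have hA : 0 < A := hS.trans hSA
  have hq : 0 < A ^ 2 - A * S + S ^ 2 := by nlinarith
  have hc : 0 < A ^ 3 + S ^ 3 := by positivity
  rw [div_le_div_iff₀ (by positivity) (by positivity)]
  have key : S * (A - S) * (A ^ 2 + S ^ 2) * (p * (A ^ 3 + S ^ 3))
      - p * S * (A ^ 2 - S ^ 2) * (A ^ 2 * (A ^ 2 - A * S + S ^ 2))
      = p * (S ^ 3 * ((A - S) * ((A + S) * (A ^ 2 - A * S + S ^ 2)))) := by ring
  nlinarith [mul_pos hp (mul_pos (pow_pos hS 3)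
    (mul_pos (sub_pos.2 hSA) (mul_pos (by linarith : (0:ℝ) < A + S) hq)))]

lemma alg_disj {A S q : ℝ} (hS : 0 < S) (hSA : S < A) (hq0 : 0 < q) :
    q * S * (A ^ 4 - S ^ 4) / (q * A ^ 2 * (A ^ 3 + S ^ 3))
      = S * (A - S) * (A ^ 2 + S ^ 2) / (A ^ 2 * (A ^ 2 - A * S + S ^ 2)) := by
  have hA : 0 < A := hS.trans hSA
  have hq : 0 < A ^ 2 - A * S + S ^ 2 := by nlinarith
  have hc : 0 < A ^ 3 + S ^ 3 := by positivity
  rw [div_eq_div_iff (by positivity) (by positivity)]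
  ring

lemma kl_le (m : ℕ) (θ : ℝ) (hθ : 0 < θ) {s t s' t' : Fin m} (hst : s < t) (hst2 : s' < t') :
    ∑ x : Fin m → Bool, margPMF m θ s t x * Real.log (margPMF m θ s t x / margPMF m θ s' t' x)
      ≤ θ * c0 θ := by
  have hne : s ≠ t := hst.ne
  have hne' : s' ≠ t' := hst2.ne
  have hZ : 0 < partition m θ s t := partition_pos m θ s t
  have hS := Sex_pos hθ
  have hSA := Sex_lt_Aex θ
  have hA := Aex_pos θ
  have step : ∀ x : Fin m → Bool,
      margPMF m θ s t x * Real.log (margPMF m θ s t x / margPMF m θ s' t' x)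
        = (θ * (srcW m θ s t x * (pm (x s) * pm (x t)))
            - θ * (srcW m θ s t x * (pm (x s') * pm (x t')))) / partition m θ s t := by
    intro x
    rw [log_ratio m θ hne hne', margPMF_eq]
    ring
  simp_rw [step]
  rw [← Finset.sum_div, Finset.sum_sub_distrib, ← Finset.mul_sum, ← Finset.mul_sum]
  have hD0 : ((({s,t} : Finset (Fin m)) ∆ ({s,t} : Finset (Fin m))).card) = 2*0 := by
    rw [symmDiff_self]; simp
  have hN := sum_srcW_corr m θ hne hne 0 hD0
  simp only [Nat.mul_zero, pow_zero, one_mul, Nat.sub_zero] at hN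
  rw [hN]
  have hcardV : ({s,t} : Finset (Fin m)).card = 2 := Finset.card_pair hne
  have hcardU : ({s',t'} : Finset (Fin m)).card = 2 := Finset.card_pair hne'
  by_cases hUV : ({s',t'} : Finset (Fin m)) = ({s,t} : Finset (Fin m))
  · have h1 : s' ∈ ({s,t} : Finset (Fin m)) := hUV ▸ (Finset.mem_insert_self _ _)
    have h2 : t' ∈ ({s,t} : Finset (Fin m)) := hUV ▸ (by simp)
    simp only [Finset.mem_insert, Finset.mem_singleton] at h1 h2
    have hss : s' = s ∧ t' = t := by
      rcases h1 with rfl | rfl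
      · rcases h2 with rfl | rfl
        · exact absurd hst2 (lt_irrefl _)
        · exact ⟨rfl, rfl⟩
      · rcases h2 with rfl | rfl
        · exact absurd (hst.trans hst2) (lt_irrefl _)
        · exact absurd hst2 (lt_irrefl _)
    rcases hss with ⟨rfl, rfl⟩
    rw [hN, sub_self, zero_div]
    exact (mul_pos hθ (c0_pos hθ)).le
  · have hC := card_symmDiff' ({s',t'} : Finset (Fin m)) ({s,t} : Finset (Fin m))
    by_cases hint : ({s',t'} : Finset (Fin m)) ∩ ({s,t} : Finset (Fin m)) = ∅
    · -- disjoint case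
      have hc0 : (({s',t'} : Finset (Fin m)) ∩ ({s,t} : Finset (Fin m))).card = 0 := by
        rw [hint]; rfl
      have hD : ((({s',t'} : Finset (Fin m)) ∆ ({s,t} : Finset (Fin m))).card) = 2*2 := by omega
      have hm4 : 4 ≤ m := by
        have hsub := Finset.card_le_univ (({s',t'} : Finset (Fin m)) ∆ ({s,t} : Finset (Fin m)))
        simp only [Finset.card_univ, Fintype.card_fin] at hsub
        omega
      have hN' := sum_srcW_corr m θ hne hne' 2 hD
      rw [hN', partition_closed m θ hne]
      have hA4 : Aex θ ^ m = Aex θ ^ (m-4) * Aex θ ^ 4 := by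
        rw [← pow_add]; congr 1; omega
      have hA2 : Aex θ ^ (m-2) = Aex θ ^ (m-4) * Aex θ ^ 2 := by
        rw [← pow_add]; congr 1; omega
      have hP : 0 < Aex θ ^ (m-4) := pow_pos hA _
      rw [hA4, hA2]
      have hrw : (θ * (Sex θ ^ 2 * (Aex θ ^ (m-4) * Aex θ ^ 2) * Aex θ + Aex θ ^ (m-4) * Aex θ ^ 4 * Sex θ)
            - θ * (Sex θ ^ 2 * (Aex θ ^ (m-4) * Aex θ ^ 2) * Aex θ + Sex θ ^ (2*2) * Aex θ ^ (m - 2*2) * Sex θ))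
          / (Aex θ ^ (m-4) * Aex θ ^ 4 * Aex θ + Sex θ ^ 2 * (Aex θ ^ (m-4) * Aex θ ^ 2) * Sex θ)
          = θ * (Aex θ ^ (m-4) * Sex θ * (Aex θ ^ 4 - Sex θ ^ 4)
              / (Aex θ ^ (m-4) * Aex θ ^ 2 * (Aex θ ^ 3 + Sex θ ^ 3))) := by
        have : Sex θ ^ (2*2) * Aex θ ^ (m - 2*2) = Sex θ ^ 4 * Aex θ ^ (m-4) := by norm_num
        rw [this]
        ring
      rw [hrw, alg_disj hS hSA hP, c0]
    · -- share case
      have hmem : (({s',t'} : Finset (Fin m)) ∩ ({s,t} : Finset (Fin m))).Nonempty :=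
        Finset.nonempty_iff_ne_empty.2 hint
      have hc1 : (({s',t'} : Finset (Fin m)) ∩ ({s,t} : Finset (Fin m))).card = 1 := by
        have hle : (({s',t'} : Finset (Fin m)) ∩ ({s,t} : Finset (Fin m))).card ≤ 2 := by
          rw [← hcardU]; exact Finset.card_le_card Finset.inter_subset_left
        have hge : 1 ≤ (({s',t'} : Finset (Fin m)) ∩ ({s,t} : Finset (Fin m))).card :=
          Finset.card_pos.2 hmem
        have hne2 : (({s',t'} : Finset (Fin m)) ∩ ({s,t} : Finset (Fin m))).card ≠ 2 := by
          intro h2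
          have he1 : ({s',t'} : Finset (Fin m)) ∩ ({s,t} : Finset (Fin m)) = {s',t'} :=
            Finset.eq_of_subset_of_card_le Finset.inter_subset_left (by omega)
          have hsub : ({s',t'} : Finset (Fin m)) ⊆ ({s,t} : Finset (Fin m)) := by
            rw [← he1]; exact Finset.inter_subset_right
          exact hUV (Finset.eq_of_subset_of_card_le hsub (by omega))
        omega
      have hD : ((({s',t'} : Finset (Fin m)) ∆ ({s,t} : Finset (Fin m))).card) = 2*1 := by omega
      have hm2 : 2 ≤ m := by
        have hsub := Finset.card_le_univ ({s,t} : Finset (Fin m))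
        simp only [Finset.card_univ, Fintype.card_fin] at hsub
        omega
      have hN' := sum_srcW_corr m θ hne hne' 1 hD
      rw [hN', partition_closed m θ hne]
      have hA2 : Aex θ ^ m = Aex θ ^ (m-2) * Aex θ ^ 2 := by
        rw [← pow_add]; congr 1; omega
      have hP : 0 < Aex θ ^ (m-2) := pow_pos hA _
      rw [hA2]
      have hrw : (θ * (Sex θ ^ 2 * Aex θ ^ (m-2) * Aex θ + Aex θ ^ (m-2) * Aex θ ^ 2 * Sex θ)
            - θ * (Sex θ ^ 2 * Aex θ ^ (m-2) * Aex θ + Sex θ ^ (2*1) * Aex θ ^ (m - 2*1) * Sex θ))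
          / (Aex θ ^ (m-2) * Aex θ ^ 2 * Aex θ + Sex θ ^ 2 * Aex θ ^ (m-2) * Sex θ)
          = θ * (Aex θ ^ (m-2) * Sex θ * (Aex θ ^ 2 - Sex θ ^ 2)
              / (Aex θ ^ (m-2) * (Aex θ ^ 3 + Sex θ ^ 3))) := by
        have : Sex θ ^ (2*1) * Aex θ ^ (m - 2*1) = Sex θ ^ 2 * Aex θ ^ (m-2) := by norm_num
        rw [this]
        ring
      rw [hrw, c0]
      exact mul_le_mul_of_nonneg_left (alg_share hS hSA hP) hθ.le

lemma c0_eq (θ : ℝ) :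
    c0 θ = 1 - 4 * (Real.exp (4*θ) + 3)⁻¹ - Real.tanh θ ^ 2 := by
  have hE : (0:ℝ) < Real.exp θ := Real.exp_pos θ
  have hE4 : Real.exp (4*θ) = Real.exp θ ^ 4 := by
    rw [show (4:ℝ)*θ = θ*(4:ℕ) by push_cast; ring, Real.exp_mul, Real.rpow_natCast]
  have htanh : Real.tanh θ = Sex θ / Aex θ := by
    rw [Real.tanh_eq_sinh_div_cosh, Real.sinh_eq, Real.cosh_eq, Sex, Aex]
    have h2 : ((Real.exp θ + Real.exp (-θ)) : ℝ) ≠ 0 := by positivity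
    field_simp
  have hFA : Real.exp (-θ) = (Real.exp θ)⁻¹ := Real.exp_neg θ
  rw [c0, htanh, hE4, Sex, Aex, hFA]
  have h4 : ((Real.exp θ ^ 4 + 3) : ℝ) ≠ 0 := by positivity
  have hApos : ((Real.exp θ + (Real.exp θ)⁻¹) : ℝ) ≠ 0 := by positivity
  have hE' : Real.exp θ ≠ 0 := hE.ne'
  have hqq : ((Real.exp θ + (Real.exp θ)⁻¹) ^ 2
      - (Real.exp θ + (Real.exp θ)⁻¹) * (Real.exp θ - (Real.exp θ)⁻¹)
      + (Real.exp θ - (Real.exp θ)⁻¹) ^ 2 : ℝ) ≠ 0 := by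
    have h2 : (0:ℝ) < (Real.exp θ)⁻¹ := by positivity
    have : (0:ℝ) < (Real.exp θ + (Real.exp θ)⁻¹) ^ 2
        - (Real.exp θ + (Real.exp θ)⁻¹) * (Real.exp θ - (Real.exp θ)⁻¹)
        + (Real.exp θ - (Real.exp θ)⁻¹) ^ 2 := by
      nlinarith [sq_nonneg (Real.exp θ - (Real.exp θ)⁻¹)]
    exact this.ne'
  rw [div_eq_iff (by exact mul_ne_zero (pow_ne_zero 2 hApos) hqq)]
  field_simp
  ring

lemma sum_prod_eval {X : Type*} [Fintype X] (n : ℕ) (k : Fin n) (P ℓ : X → ℝ)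
    (hP : ∑ x : X, P x = 1) :
    ∑ D : Fin n → X, (∏ j, P (D j)) * ℓ (D k) = ∑ x : X, P x * ℓ x := by
  have h1 : ∀ D : Fin n → X,
      (∏ j, P (D j)) * ℓ (D k) = ∏ j, (P (D j) * if j = k then ℓ (D j) else 1) := by
    intro D
    rw [Finset.prod_mul_distrib]
    congr 1
    rw [Finset.prod_ite_eq' Finset.univ k (fun j => ℓ (D j)), if_pos (Finset.mem_univ k)]
  simp_rw [h1]
  rw [← Fintype.prod_sum (fun j x => P x * if j = k then ℓ x else 1)]
  have h2 : ∀ j : Fin n, (∑ x : X, P x * if j = k then ℓ x else 1)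
      = if j = k then ∑ x : X, P x * ℓ x else 1 := by
    intro j
    by_cases h : j = k
    · simp [h]
    · simp [h, hP]
  simp_rw [h2]
  rw [Finset.prod_ite_eq' Finset.univ k (fun _ => ∑ x : X, P x * ℓ x),
    if_pos (Finset.mem_univ k)]

def prodPMF (m n : ℕ) (θ : ℝ) (s t : Fin m) (D : Fin n → Fin m → Bool) : ℝ :=
  ∏ k, margPMF m θ s t (D k)

lemma prodPMF_pos (m n : ℕ) (θ : ℝ) (s t : Fin m) (D : Fin n → Fin m → Bool) :
    0 < prodPMF m n θ s t D :=
  Finset.prod_pos (fun k _ => margPMF_pos m θ s t (D k))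

lemma sum_prodPMF (m n : ℕ) (θ : ℝ) (s t : Fin m) :
    ∑ D : Fin n → Fin m → Bool, prodPMF m n θ s t D = 1 := by
  have h := Fintype.sum_pow (fun x => margPMF m θ s t x) n
  rw [sum_margPMF, one_pow] at h
  exact h.symm

lemma kln_le (m n : ℕ) (θ : ℝ) (hθ : 0 < θ) {s t s' t' : Fin m}
    (hst : s < t) (hst2 : s' < t') :
    ∑ D : Fin n → Fin m → Bool,
        prodPMF m n θ s t D * Real.log (prodPMF m n θ s t D / prodPMF m n θ s' t' D)
      ≤ (n : ℝ) * (θ * c0 θ) := by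
  have hlog : ∀ D : Fin n → Fin m → Bool,
      Real.log (prodPMF m n θ s t D / prodPMF m n θ s' t' D)
        = ∑ k, Real.log (margPMF m θ s t (D k) / margPMF m θ s' t' (D k)) := by
    intro D
    rw [prodPMF, prodPMF, ← Finset.prod_div_distrib]
    exact Real.log_prod
      (fun k _ => (div_pos (margPMF_pos m θ s t (D k)) (margPMF_pos m θ s' t' (D k))).ne')
  simp_rw [hlog, Finset.mul_sum]
  rw [Finset.sum_comm]
  have hinner : ∀ k : Fin n,
      (∑ D : Fin n → Fin m → Bool, prodPMF m n θ s t D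
          * Real.log (margPMF m θ s t (D k) / margPMF m θ s' t' (D k)))
        = ∑ x : Fin m → Bool, margPMF m θ s t x
            * Real.log (margPMF m θ s t x / margPMF m θ s' t' x) := by
    intro k
    simp_rw [prodPMF]
    exact sum_prod_eval n k (margPMF m θ s t)
      (fun x => Real.log (margPMF m θ s t x / margPMF m θ s' t' x)) (sum_margPMF m θ s t)
  calc ∑ k : Fin n, ∑ D : Fin n → Fin m → Bool, prodPMF m n θ s t D
          * Real.log (margPMF m θ s t (D k) / margPMF m θ s' t' (D k))
      ≤ ∑ _k : Fin n, θ * c0 θ := by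
        apply Finset.sum_le_sum
        intro k _
        rw [hinner k]
        exact kl_le m θ hθ hst hst2
    _ = (n : ℝ) * (θ * c0 θ) := by
        rw [Finset.sum_const, Finset.card_univ, Fintype.card_fin, nsmul_eq_mul]

lemma block_bound {ι : Type*} (S : Finset ι) (hS : S.Nonempty) (p q : ι → ℝ)
    (hp : ∀ i ∈ S, 0 < p i) (hq : ∀ i ∈ S, 0 < q i) :
    (∑ i ∈ S, p i) * Real.log ((∑ i ∈ S, p i) / (∑ i ∈ S, q i))
      ≤ ∑ i ∈ S, p i * Real.log (p i / q i) := by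
  have hP : 0 < ∑ i ∈ S, p i := Finset.sum_pos hp hS
  have hQ : 0 < ∑ i ∈ S, q i := Finset.sum_pos hq hS
  set P := ∑ i ∈ S, p i with hPdef
  set Q := ∑ i ∈ S, q i with hQdef
  have main : ∀ i ∈ S, p i * Real.log (P/Q) + (p i - q i * (P/Q))
      ≤ p i * Real.log (p i / q i) := by
    intro i hi
    have hpi := hp i hi
    have hqi := hq i hi
    have hz : 0 < (q i * P) / (p i * Q) := by positivity
    have hlog := Real.log_le_sub_one_of_pos hz
    have hlogeq : Real.log ((q i * P)/(p i * Q))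
        = Real.log (q i) + Real.log P - Real.log (p i) - Real.log Q := by
      rw [Real.log_div (by positivity) (by positivity), Real.log_mul hqi.ne' hP.ne',
        Real.log_mul hpi.ne' hQ.ne']
      ring
    have h2 := mul_le_mul_of_nonneg_left hlog hpi.le
    have h3 : p i * ((q i * P)/(p i * Q)) = q i * (P/Q) := by
      field_simp
    rw [hlogeq] at h2
    rw [Real.log_div hpi.ne' hqi.ne', Real.log_div hP.ne' hQ.ne']
    nlinarith [h2, h3]
  calc P * Real.log (P/Q)
      = ∑ i ∈ S, (p i * Real.log (P/Q) + (p i - q i * (P/Q))) := by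
        rw [Finset.sum_add_distrib, ← Finset.sum_mul, Finset.sum_sub_distrib,
          ← Finset.sum_mul]
        rw [← hPdef, ← hQdef]
        field_simp
        ring
    _ ≤ ∑ i ∈ S, p i * Real.log (p i / q i) := Finset.sum_le_sum main

lemma two_point {a b : ℝ} (ha : 0 < a) (hb : 0 < b) (hab : a + b = 1) :
    -Real.log 2 ≤ a * Real.log a + b * Real.log b := by
  have h1 := Real.log_le_sub_one_of_pos (show (0:ℝ) < 1/(2*a) by positivity)
  have h2 := Real.log_le_sub_one_of_pos (show (0:ℝ) < 1/(2*b) by positivity)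
  have e1 : Real.log (1/(2*a)) = -(Real.log 2 + Real.log a) := by
    rw [one_div, Real.log_inv, Real.log_mul two_ne_zero ha.ne']
  have e2 : Real.log (1/(2*b)) = -(Real.log 2 + Real.log b) := by
    rw [one_div, Real.log_inv, Real.log_mul two_ne_zero hb.ne']
  rw [e1] at h1; rw [e2] at h2
  have m1 := mul_le_mul_of_nonneg_left h1 ha.le
  have m2 := mul_le_mul_of_nonneg_left h2 hb.le
  have c1 : a * (1/(2*a) - 1) = 1/2 - a := by field_simp
  have c2 : b * (1/(2*b) - 1) = 1/2 - b := by field_simp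
  rw [c1] at m1; rw [c2] at m2
  have e3 : a * -(Real.log 2 + Real.log a) = -(a * Real.log 2) - a * Real.log a := by ring
  have e4 : b * -(Real.log 2 + Real.log b) = -(b * Real.log 2) - b * Real.log b := by ring
  have e5 : a * Real.log 2 + b * Real.log 2 = Real.log 2 := by
    rw [← add_mul, hab, one_mul]
  rw [e3] at m1; rw [e4] at m2
  linarith

lemma card_pairs (m : ℕ) :
    Fintype.card {p : Fin m × Fin m // p.1 < p.2} * 2 = m * (m - 1) := by
  rw [Fintype.card_subtype]
  have h1 : (Finset.univ.filter (fun p : Fin m × Fin m => p.1 < p.2)).card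
      = ∑ a : Fin m, (Finset.univ.filter (fun b : Fin m => a < b)).card := by
    rw [Finset.card_filter, Fintype.sum_prod_type]
    exact Finset.sum_congr rfl (fun a _ => (Finset.card_filter _ _).symm)
  have h2 : ∀ a : Fin m, (Finset.univ.filter (fun b : Fin m => a < b)) = Finset.Ioi a := by
    intro a; ext b; simp
  have h3 : ∀ a : Fin m, (Finset.Ioi a).card = m - 1 - (a : ℕ) := fun a => Fin.card_Ioi a
  rw [h1]
  simp_rw [h2, h3]
  rw [Fin.sum_univ_eq_sum_range (fun i => m - 1 - i) m]
  have h4 : ∑ i ∈ Finset.range m, (m - 1 - i) = ∑ i ∈ Finset.range m, i := by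
    rw [← Finset.sum_range_reflect (fun i => i) m]
  rw [h4, Finset.sum_range_id_mul_two]


/-- The probability, under `n` i.i.d. samples of the observed sources drawn from the marginal
`P_{G^{st}}`, that a decoder `φ` fails to output the graph `G^{st}` (indexed by the ordered
pair `e = (s,t)`, `s < t`). -/
def errProb (m n : ℕ) (θ : ℝ) (e : {p : Fin m × Fin m // p.1 < p.2})
    (φ : (Fin n → Fin m → Bool) → {p : Fin m × Fin m // p.1 < p.2}) : ℝ :=
  ∑ D : Fin n → Fin m → Bool,
    if φ D = e then 0 else ∏ k : Fin n, margPMF m θ e.1.1 e.1.2 (D k)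

set_option maxHeartbeats 2000000 in
/-- **Theorem 2, information-theoretic lower bound.** Fix `m ≥ 3`, `θ > 0`,
`δ ∈ (0,1)`, `n ≥ 1`. If
`n < (1−δ)·log(m(m−1)/2)/(2θ(1 − 4(e^{4θ}+3)^{−1} − tanh²(θ)))`, then every decoding
procedure `φ` mapping `n` observed-source samples to a graph of the class
`𝒢_ws = {G^{st} : s < t}` has maximum probability of error at least `δ − 1/log M`, where
`M = m(m−1)/2`. -/
theorem info_theoretic_lower_bound (m n : ℕ) (hm : 3 ≤ m) (hn : 1 ≤ n)
    (θ : ℝ) (hθ : 0 < θ) (δ : ℝ) (hδ0 : 0 < δ) (hδ1 : δ < 1)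
    (hsamples : (n : ℝ) <
      (1 - δ) * Real.log ((m : ℝ) * ((m : ℝ) - 1) / 2) /
        (2 * θ * (1 - 4 * (Real.exp (4 * θ) + 3)⁻¹ - Real.tanh θ ^ 2)))
    (φ : (Fin n → Fin m → Bool) → {p : Fin m × Fin m // p.1 < p.2}) :
    ∃ e : {p : Fin m × Fin m // p.1 < p.2},
      δ - 1 / Real.log ((m : ℝ) * ((m : ℝ) - 1) / 2) ≤ errProb m n θ e φ := by
  have hm1 : 1 ≤ m := by omega
  have hK2 : Fintype.card {p : Fin m × Fin m // p.1 < p.2} * 2 = m * (m-1) := card_pairs m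
  set K := Fintype.card {p : Fin m × Fin m // p.1 < p.2} with hKdef
  have hK6 : 6 ≤ m * (m-1) := by
    calc 6 = 3 * 2 := rfl
    _ ≤ m * (m-1) := Nat.mul_le_mul hm (by omega)
  have hK3 : 3 ≤ K := by omega
  have hKreal : (K:ℝ) = (m:ℝ) * ((m:ℝ)-1)/2 := by
    have h : ((K * 2 : ℕ) : ℝ) = ((m * (m-1) : ℕ) : ℝ) := by exact congrArg (fun x : ℕ => (x:ℝ)) hK2
    push_cast [Nat.cast_sub hm1] at h
    linarith
  have hKpos : (0:ℝ) < (K:ℝ) := by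
    have : (0:ℕ) < K := by omega
    exact_mod_cast this
  have hKne : (K:ℝ) ≠ 0 := hKpos.ne'
  set L := Real.log ((m:ℝ)*((m:ℝ)-1)/2) with hLdef
  have hLK : L = Real.log (K:ℝ) := by rw [hLdef, hKreal]
  have hLpos : 0 < L := by
    rw [hLK]
    apply Real.log_pos
    have : (3:ℝ) ≤ (K:ℝ) := by exact_mod_cast hK3
    linarith
  have hc0 : 0 < c0 θ := c0_pos hθ
  rw [← c0_eq θ] at hsamples
  have hd2 : (0:ℝ) < 2*θ*c0 θ := by positivity
  rw [lt_div_iff₀ hd2] at hsamples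
  have hsamples' : (n:ℝ) * (θ * c0 θ) < (1-δ)*L/2 := by
    nlinarith [hsamples]
  -- the distinguished index e0
  set e0 : {p : Fin m × Fin m // p.1 < p.2} :=
    ⟨(⟨0, by omega⟩, ⟨1, by omega⟩), by simp [Fin.lt_def]⟩ with he0
  set Pn : {p : Fin m × Fin m // p.1 < p.2} → (Fin n → Fin m → Bool) → ℝ :=
    fun e D => prodPMF m n θ e.1.1 e.1.2 D with hPndef
  have hPnpos : ∀ e D, 0 < Pn e D := fun e D => prodPMF_pos m n θ _ _ D
  have hPnsum : ∀ e, ∑ D : Fin n → Fin m → Bool, Pn e D = 1 := fun e => sum_prodPMF m n θ _ _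
  have hKLn : ∀ e : {p : Fin m × Fin m // p.1 < p.2},
      ∑ D : Fin n → Fin m → Bool, Pn e D * Real.log (Pn e D / Pn e0 D)
        ≤ (n:ℝ) * (θ * c0 θ) := by
    intro e
    have h1 : ∀ D : Fin n → Fin m → Bool, Pn e D * Real.log (Pn e D / Pn e0 D)
        = prodPMF m n θ e.1.1 e.1.2 D
            * Real.log (prodPMF m n θ e.1.1 e.1.2 D / prodPMF m n θ e0.1.1 e0.1.2 D) := by
      intro D; rfl
    simp_rw [h1]
    exact kln_le m n θ hθ e.2 e0.2
  -- the "correct" mass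
  set C := ∑ e : {p : Fin m × Fin m // p.1 < p.2}, ∑ D : Fin n → Fin m → Bool,
      (if φ D = e then Pn e D else 0) with hCdef
  have herr : ∀ e, errProb m n θ e φ
      = 1 - ∑ D : Fin n → Fin m → Bool, (if φ D = e then Pn e D else 0) := by
    intro e
    rw [errProb]
    have h1 : ∀ D : Fin n → Fin m → Bool,
        (if φ D = e then 0 else ∏ k : Fin n, margPMF m θ e.1.1 e.1.2 (D k))
          = Pn e D - (if φ D = e then Pn e D else 0) := by
      intro D
      by_cases h : φ D = e <;> simp [h, hPndef, prodPMF]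
    simp_rw [h1]
    rw [Finset.sum_sub_distrib, hPnsum e]
  have hsum_err : ∑ e : {p : Fin m × Fin m // p.1 < p.2}, errProb m n θ e φ = (K:ℝ) - C := by
    simp_rw [herr]
    rw [Finset.sum_sub_distrib, Finset.sum_const, Finset.card_univ, nsmul_eq_mul, mul_one,
      ← hCdef, ← hKdef]
  -- Fano setup
  set μ : {p : Fin m × Fin m // p.1 < p.2} × (Fin n → Fin m → Bool) → ℝ :=
    fun z => Pn z.1 z.2 / K with hμdef
  set ν : {p : Fin m × Fin m // p.1 < p.2} × (Fin n → Fin m → Bool) → ℝ :=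
    fun z => Pn e0 z.2 / K with hνdef
  set A : Finset ({p : Fin m × Fin m // p.1 < p.2} × (Fin n → Fin m → Bool)) :=
    Finset.univ.filter (fun z => φ z.2 = z.1) with hAdef
  have hμpos : ∀ z, 0 < μ z := fun z => div_pos (hPnpos z.1 z.2) hKpos
  have hνpos : ∀ z, 0 < ν z := fun z => div_pos (hPnpos e0 z.2) hKpos
  have hite : ∀ (c : Prop) [Decidable c] (a : ℝ), (if c then a else 0) / (K:ℝ)
      = if c then a / K else 0 := by
    intro c _ a; split <;> simp
  have hμA : ∑ z ∈ A, μ z = C / K := by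
    rw [hAdef, Finset.sum_filter, Fintype.sum_prod_type, hCdef, Finset.sum_div]
    apply Finset.sum_congr rfl
    intro e _
    rw [Finset.sum_div]
    apply Finset.sum_congr rfl
    intro D _
    rw [hite]
  have hνA : ∑ z ∈ A, ν z = 1 / K := by
    rw [hAdef, Finset.sum_filter, Fintype.sum_prod_type, Finset.sum_comm]
    have h1 : ∀ D : Fin n → Fin m → Bool,
        (∑ e : {p : Fin m × Fin m // p.1 < p.2}, if φ D = e then ν (e, D) else 0)
          = Pn e0 D / K := by
      intro D
      rw [Finset.sum_ite_eq]
      simp [hνdef]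
    simp_rw [h1]
    rw [← Finset.sum_div, hPnsum e0]
  have htotμ : ∑ z : {p : Fin m × Fin m // p.1 < p.2} × (Fin n → Fin m → Bool), μ z = 1 := by
    rw [Fintype.sum_prod_type]
    have h1 : ∀ e : {p : Fin m × Fin m // p.1 < p.2},
        (∑ D : Fin n → Fin m → Bool, μ (e, D)) = 1 / K := by
      intro e
      rw [show (∑ D : Fin n → Fin m → Bool, μ (e, D))
          = (∑ D : Fin n → Fin m → Bool, Pn e D) / K by rw [Finset.sum_div], hPnsum e]
    simp_rw [h1]
    rw [Finset.sum_const, Finset.card_univ, nsmul_eq_mul, ← hKdef]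
    field_simp
  have htotν : ∑ z : {p : Fin m × Fin m // p.1 < p.2} × (Fin n → Fin m → Bool), ν z = 1 := by
    rw [Fintype.sum_prod_type]
    have h1 : ∀ e : {p : Fin m × Fin m // p.1 < p.2},
        (∑ D : Fin n → Fin m → Bool, ν (e, D)) = 1 / K := by
      intro e
      rw [show (∑ D : Fin n → Fin m → Bool, ν (e, D))
          = (∑ D : Fin n → Fin m → Bool, Pn e0 D) / K by rw [Finset.sum_div], hPnsum e0]
    simp_rw [h1]
    rw [Finset.sum_const, Finset.card_univ, nsmul_eq_mul, ← hKdef]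
    field_simp
  -- total KL bound
  have hKLtot : ∑ z : {p : Fin m × Fin m // p.1 < p.2} × (Fin n → Fin m → Bool),
      μ z * Real.log (μ z / ν z) ≤ (n:ℝ) * (θ * c0 θ) := by
    have hratio : ∀ z : {p : Fin m × Fin m // p.1 < p.2} × (Fin n → Fin m → Bool),
        μ z / ν z = Pn z.1 z.2 / Pn e0 z.2 := by
      intro z
      have h1 : Pn e0 z.2 ≠ 0 := (hPnpos e0 z.2).ne'
      rw [hμdef, hνdef]
      field_simp
    simp_rw [hratio]
    rw [Fintype.sum_prod_type]
    have hinner : ∀ e : {p : Fin m × Fin m // p.1 < p.2},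
        (∑ D : Fin n → Fin m → Bool, μ (e, D) * Real.log (Pn e D / Pn e0 D))
          = (∑ D : Fin n → Fin m → Bool, Pn e D * Real.log (Pn e D / Pn e0 D)) / K := by
      intro e
      rw [Finset.sum_div]
      apply Finset.sum_congr rfl
      intro D _
      rw [hμdef]
      ring
    simp_rw [hinner]
    calc ∑ e : {p : Fin m × Fin m // p.1 < p.2},
          (∑ D : Fin n → Fin m → Bool, Pn e D * Real.log (Pn e D / Pn e0 D)) / K
        ≤ ∑ _e : {p : Fin m × Fin m // p.1 < p.2}, ((n:ℝ) * (θ * c0 θ)) / K := by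
          apply Finset.sum_le_sum
          intro e _
          exact (div_le_div_iff_of_pos_right hKpos).mpr (hKLn e)
      _ = (n:ℝ) * (θ * c0 θ) := by
          rw [Finset.sum_const, Finset.card_univ, nsmul_eq_mul, ← hKdef]
          field_simp
  -- nonemptiness of the two blocks
  have hAne : A.Nonempty := by
    refine ⟨(φ (fun _ _ => true), (fun _ _ => true)), ?_⟩
    rw [hAdef, Finset.mem_filter]
    exact ⟨Finset.mem_univ _, rfl⟩
  have hBne : (Finset.univ \ A).Nonempty := by
    obtain ⟨e1, he1⟩ := Fintype.exists_ne_of_one_lt_card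
      (show 1 < Fintype.card {p : Fin m × Fin m // p.1 < p.2} by omega) (φ (fun _ _ => true))
    refine ⟨(e1, (fun _ _ => true)), ?_⟩
    rw [Finset.mem_sdiff, hAdef, Finset.mem_filter]
    exact ⟨Finset.mem_univ _, fun h => (fun h2 => he1 h2.symm) h.2⟩
  have hbA := block_bound A hAne μ ν (fun i _ => hμpos i) (fun i _ => hνpos i)
  have hbB := block_bound (Finset.univ \ A) hBne μ ν (fun i _ => hμpos i) (fun i _ => hνpos i)
  have hsplit : ∀ f : {p : Fin m × Fin m // p.1 < p.2} × (Fin n → Fin m → Bool) → ℝ,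
      (∑ z ∈ Finset.univ \ A, f z) + ∑ z ∈ A, f z = ∑ z, f z :=
    fun f => Finset.sum_sdiff (Finset.subset_univ A)
  have hμB : ∑ z ∈ Finset.univ \ A, μ z = 1 - C/K := by
    have h := hsplit μ
    rw [htotμ, hμA] at h
    linarith
  have hνB : ∑ z ∈ Finset.univ \ A, ν z = 1 - 1/K := by
    have h := hsplit ν
    rw [htotν, hνA] at h
    linarith
  have hpbpos : 0 < C/K := by
    have h : 0 < ∑ z ∈ A, μ z := Finset.sum_pos (fun i _ => hμpos i) hAne
    rwa [hμA] at h
  have hpblt : C/K < 1 := by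
    have h : 0 < ∑ z ∈ Finset.univ \ A, μ z := Finset.sum_pos (fun i _ => hμpos i) hBne
    rw [hμB] at h
    linarith
  have h1K : 0 < 1 - 1/(K:ℝ) := by
    have h3 : (3:ℝ) ≤ (K:ℝ) := by exact_mod_cast hK3
    have : 1/(K:ℝ) ≤ 1/3 := by
      apply one_div_le_one_div_of_le <;> linarith
    linarith
  rw [hμA, hνA] at hbA
  rw [hμB, hνB] at hbB
  have l1 : Real.log ((C/K)/(1/K)) = Real.log (C/K) + Real.log (K:ℝ) := by
    rw [Real.log_div hpbpos.ne' (by positivity : (1/(K:ℝ)) ≠ 0), one_div, Real.log_inv]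
    ring
  have l2 : Real.log (1 - C/K) ≤ Real.log ((1 - C/K)/(1 - 1/K)) := by
    rw [Real.log_div (by linarith : (1 - C/K) ≠ 0) h1K.ne']
    have : Real.log (1 - 1/(K:ℝ)) ≤ 0 := Real.log_nonpos (by linarith) (by
      have : 0 < 1/(K:ℝ) := by positivity
      linarith)
    linarith
  have htp := two_point hpbpos (by linarith : (0:ℝ) < 1 - C/K) (by ring)
  have hfano : (C/K) * L ≤ (n:ℝ) * (θ * c0 θ) + Real.log 2 := by
    have hc1 := mul_le_mul_of_nonneg_left l2 (by linarith : (0:ℝ) ≤ 1 - C/K)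
    have hchain : (C/K) * (Real.log (C/K) + Real.log (K:ℝ))
        + (1 - C/K) * Real.log (1 - C/K) ≤ (n:ℝ) * (θ * c0 θ) := by
      have hs := hsplit (fun z => μ z * Real.log (μ z / ν z))
      rw [l1] at hbA
      linarith [hbA, hbB, hKLtot, hs, hc1]
    rw [hLK]
    have hexp : (C/K)*(Real.log (C/K) + Real.log (K:ℝ))
        = (C/K)*Real.log (C/K) + (C/K)*Real.log (K:ℝ) := by ring
    linarith [htp, hchain, hexp]
  -- conclusion
  by_contra hcon
  push_neg at hcon
  have hne2 : Nonempty {p : Fin m × Fin m // p.1 < p.2} := Fintype.card_pos_iff.mp (by omega)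
  have hlt := Finset.sum_lt_sum_of_nonempty Finset.univ_nonempty
    (fun e (_ : e ∈ Finset.univ) => hcon e)
  rw [hsum_err, Finset.sum_const, Finset.card_univ, nsmul_eq_mul, ← hKdef] at hlt
  have h6 : (1:ℝ) - C/K < δ - 1/L := by
    by_contra h7
    push_neg at h7
    have h8 := mul_le_mul_of_nonneg_left h7 hKpos.le
    have h9 : (K:ℝ) * (1 - C/K) = K - C := by field_simp
    linarith
  have h10 : ((1:ℝ) - δ + 1/L) < C/K := by linarith
  have h11 := mul_lt_mul_of_pos_right h10 hLpos
  have h12 : ((1:ℝ) - δ + 1/L) * L = (1-δ)*L + 1 := by field_simp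
  have h13 : 0 < (1-δ)*L := mul_pos (by linarith) hLpos
  have hlog2 : Real.log 2 ≤ 1 := by
    have := Real.log_le_sub_one_of_pos (show (0:ℝ) < 2 by norm_num)
    linarith
  linarith [hfano, h11, hsamples']
end
end

section
/- In the weak supervision Ising model with graph G^{st} (edges (λ_i, Y) for all 1 ≤ i ≤ m and the edge (λ_s, λ_t), all with parameter θ), the correlation of the endpoints of the extra edge equals E_{G^{st}}[λ_s λ_t] = (e^{3θ} − e^{−θ})/(e^{3θ} + 3e^{−θ}) = 1 − 4/(e^{4θ} + 3). -/
open BigOperators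

noncomputable section

/-! Conditionally on the label `Y = y`, the weight `exp (θ * ∑ i, λ_i y) * exp (θ * λ_s λ_t)` is a
product over the sources apart from the one factor coupling `λ_s` and `λ_t`. Summing out the
`m - 2` other sources therefore gives the common factor `(e^θ + e^{-θ})^(m-2)`, and what remains
is the triangle on `(Y, λ_s, λ_t)`: for each `y`, the configuration with all three spins equal
has weight `e^{3θ}` and `λ_s λ_t = 1`, while each of the other three has weight `e^{-θ}`, and
`λ_s λ_t = 1` for exactly one of them. -/

open Finset Real

namespace Fintype

variable {ι β R : Type*} [Fintype ι] [DecidableEq ι] [Fintype β] [DecidableEq β] [CommSemiring R]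

theorem sum_filter_apply_eq_prod {s t : ι} (hst : s ≠ t) (f : ι → β → R) (a b : β) :
    ∑ x : ι → β with (x s, x t) = (a, b), ∏ i, f i (x i) =
      f s a * f t b * ∏ i ∈ {s, t}ᶜ, ∑ c, f i c := by
  set T : ι → Finset β := Function.update (Function.update (fun _ => univ) s {a}) t {b}
  have hfiber : ({x : ι → β | (x s, x t) = (a, b)} : Finset _) = piFinset T := by
    ext x
    simp only [mem_filter, mem_univ, true_and, mem_piFinset, Function.update_apply, T]
    grind
  have hrest : ∏ i ∈ (univ.erase s).erase t, ∑ c ∈ T i, f i c = ∏ i ∈ {s, t}ᶜ, ∑ c, f i c := by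
    refine Finset.prod_congr (by ext; simp [and_comm]) fun i hi => ?_
    simp only [mem_compl, mem_insert, mem_singleton, not_or] at hi
    simp [T, hi]
  rw [hfiber, ← prod_univ_sum, ← mul_prod_erase univ _ (mem_univ s),
    ← mul_prod_erase _ _ (mem_erase.2 ⟨hst.symm, mem_univ t⟩), hrest]
  simp [T, hst, mul_assoc]

theorem sum_prod_mul_apply_apply {s t : ι} (hst : s ≠ t) (f : ι → β → R) (g : β → β → R) :
    ∑ x : ι → β, (∏ i, f i (x i)) * g (x s) (x t) =
      (∏ i ∈ {s, t}ᶜ, ∑ c, f i c) * ∑ a, ∑ b, f s a * f t b * g a b := by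
  rw [← Finset.sum_fiberwise univ (fun x : ι → β => (x s, x t)), sum_prod_type, mul_sum]
  refine Finset.sum_congr rfl fun a _ => ?_
  rw [mul_sum]
  refine Finset.sum_congr rfl fun b _ => ?_
  calc ∑ x : ι → β with (x s, x t) = (a, b), (∏ i, f i (x i)) * g (x s) (x t)
      = (∑ x : ι → β with (x s, x t) = (a, b), ∏ i, f i (x i)) * g a b := by
        rw [Finset.sum_mul]
        refine Finset.sum_congr rfl fun x hx => ?_
        obtain ⟨rfl, rfl⟩ := Prod.mk.inj (mem_filter.1 hx).2
        rfl
    _ = _ := by rw [sum_filter_apply_eq_prod hst]; ring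

theorem sum_sum_elim_unit {α γ M : Type*} [Fintype α] [DecidableEq α] [Fintype γ]
    [AddCommMonoid M] (F : (α ⊕ Unit → γ) → M) :
    ∑ σ, F σ = ∑ y, ∑ x, F (Sum.elim x fun _ => y) := by
  rw [← (Equiv.sumArrowEquivProdArrow α Unit γ).symm.sum_comp, sum_prod_type,
    Finset.sum_comm, ← (Equiv.funUnique Unit γ).symm.sum_comp]
  rfl

end Fintype

theorem exp_three_mul (x : ℝ) : exp (3 * x) = exp x ^ 3 := by
  rw [← exp_nat_mul]; norm_num

theorem div_eq_one_sub_div_exp (θ : ℝ) :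
    (exp (3 * θ) - exp (-θ)) / (exp (3 * θ) + 3 * exp (-θ)) = 1 - 4 / (exp (4 * θ) + 3) := by
  have h4 : exp (4 * θ) = exp θ ^ 4 := by rw [← exp_nat_mul]; norm_num
  rw [exp_three_mul, h4, exp_neg]
  field_simp
  ring

theorem sum_exp_mul_pm (θ : ℝ) (y : Bool) : ∑ c, exp (θ * (pm c * pm y)) = exp θ + exp (-θ) := by
  cases y <;> simp [pm, add_comm]

section IsingModel

variable {m : ℕ} {θ : ℝ} {s t : Fin m}

theorem exp_energy_sum_elim (x : Fin m → Bool) (y : Bool) :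
    exp (energy m θ s t (Sum.elim x fun _ => y)) =
      (∏ i, exp (θ * (pm (x i) * pm y))) * exp (θ * (pm (x s) * pm (x t))) := by
  simp only [energy, Sum.elim_inl, Sum.elim_inr, mul_add, mul_sum, exp_add, exp_sum]

theorem sum_exp_energy_mul (hst : s ≠ t) (w : Bool → Bool → ℝ) :
    ∑ σ, exp (energy m θ s t σ) * w (σ (.inl s)) (σ (.inl t)) =
      (exp θ + exp (-θ)) ^ (m - 2) * ∑ y, ∑ a, ∑ b,
        exp (θ * (pm a * pm y)) * exp (θ * (pm b * pm y)) * (exp (θ * (pm a * pm b)) * w a b) := by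
  rw [Fintype.sum_sum_elim_unit, mul_sum]
  refine sum_congr rfl fun y _ => ?_
  simp only [Sum.elim_inl, exp_energy_sum_elim, mul_assoc]
  rw [Fintype.sum_prod_mul_apply_apply hst (fun _ c => exp (θ * (pm c * pm y)))
    (fun a b => exp (θ * (pm a * pm b)) * w a b)]
  simp only [sum_exp_mul_pm, prod_const, card_compl, card_pair hst, Fintype.card_fin, mul_assoc]

theorem partition_eq (hst : s ≠ t) :
    partition m θ s t = 2 * (exp θ + exp (-θ)) ^ (m - 2) * (exp (3 * θ) + 3 * exp (-θ)) := by
  have h := sum_exp_energy_mul (θ := θ) hst fun _ _ => 1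
  simp only [mul_one] at h
  rw [partition, h]
  simp only [Fintype.sum_bool, pm, ↓reduceIte, Bool.false_eq_true, mul_one, mul_neg, neg_neg,
    exp_three_mul, exp_neg]
  field_simp
  ring

theorem sum_exp_energy_mul_pm (hst : s ≠ t) :
    ∑ σ, exp (energy m θ s t σ) * (pm (σ (.inl s)) * pm (σ (.inl t))) =
      2 * (exp θ + exp (-θ)) ^ (m - 2) * (exp (3 * θ) - exp (-θ)) := by
  rw [sum_exp_energy_mul hst fun a b => pm a * pm b]
  simp only [Fintype.sum_bool, pm, ↓reduceIte, Bool.false_eq_true, mul_one, mul_neg, neg_neg,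
    exp_three_mul, exp_neg]
  field_simp
  ring

theorem isingCorr_eq_div (a b : Fin m) :
    isingCorr m θ s t a b =
      (∑ σ, exp (energy m θ s t σ) * (pm (σ (.inl a)) * pm (σ (.inl b)))) / partition m θ s t := by
  simp only [isingCorr, isingPMF, div_mul_eq_mul_div, sum_div]

end IsingModel

theorem edge_correlation_general (m : ℕ) (θ : ℝ)
    (s t : Fin m) (hst : s ≠ t) :
    isingCorr m θ s t s t =
      (Real.exp (3 * θ) - Real.exp (-θ)) / (Real.exp (3 * θ) + 3 * Real.exp (-θ)) ∧
    isingCorr m θ s t s t = 1 - 4 / (Real.exp (4 * θ) + 3) := by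
  have hcorr : isingCorr m θ s t s t =
      (exp (3 * θ) - exp (-θ)) / (exp (3 * θ) + 3 * exp (-θ)) := by
    rw [isingCorr_eq_div, sum_exp_energy_mul_pm hst, partition_eq hst,
      mul_div_mul_left _ _ (by positivity)]
  exact ⟨hcorr, hcorr.trans (div_eq_one_sub_div_exp θ)⟩

/-- In the weak supervision Ising model with graph `G^{st}`, the correlation
of the endpoints of the extra edge equals
`E_{G^{st}}[λ_s λ_t] = (e^{3θ} − e^{−θ})/(e^{3θ} + 3e^{−θ}) = 1 − 4/(e^{4θ} + 3)`. -/
theorem edge_correlation (m : ℕ) (hm : 2 ≤ m) (θ : ℝ) (hθ : 0 < θ)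
    (s t : Fin m) (hst : s ≠ t) :
    isingCorr m θ s t s t =
      (Real.exp (3 * θ) - Real.exp (-θ)) / (Real.exp (3 * θ) + 3 * Real.exp (-θ)) ∧
    isingCorr m θ s t s t = 1 - 4 / (Real.exp (4 * θ) + 3) :=
  edge_correlation_general m θ s t hst
end
end

section
/- For every θ > 0, one has 1 − 4/(e^{4θ} + 3) > tanh²(θ); equivalently, (e^{4θ} − 1)/(e^{4θ} + 3) > tanh²(θ). Hence in the weak supervision Ising ensemble the symmetric KL divergence 2θ(1 − 4(e^{4θ}+3)^{−1} − tanh²(θ)) between distinct graphs G^{st} and G^{uv} is strictly positive, but strictly smaller than the supervised-case divergence 2θ tanh(θ) would suggest, since the latent variable Y correlates λ_s and λ_t even when the edge (λ_s, λ_t) is absent. -/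
/-!
In terms of `t = tanh θ` (so that `e^{2θ} = (1 + t)/(1 - t)`), the edge correlation of the
triangle is `1 - 4/(e^{4θ} + 3) = t / (1 - t + t²)`. For `0 < t < 1` this exceeds `t²` because
`t - t²(1 - t + t²) = t(1 - t)(1 + t²) > 0`, and it is below `t + t²` because
`(t + t²)(1 - t + t²) = t(1 + t³) > t`.
-/

open Real

theorem Real.tanh_pos_of_pos {x : ℝ} (hx : 0 < x) : 0 < tanh x := by
  rw [tanh_eq_sinh_div_cosh]
  exact div_pos (sinh_pos_iff.mpr hx) (cosh_pos x)

theorem Real.tanh_eq_exp_two_mul (x : ℝ) :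
    tanh x = (exp (2 * x) - 1) / (exp (2 * x) + 1) := by
  rw [tanh_eq, exp_neg, two_mul, exp_add]
  field_simp

theorem Real.one_sub_four_div_exp_four_mul_add_three (x : ℝ) :
    1 - 4 / (exp (4 * x) + 3) = tanh x / (1 - tanh x + tanh x ^ 2) := by
  have h4 : exp (4 * x) = exp (2 * x) ^ 2 := by rw [← exp_nat_mul]; ring_nf
  rw [tanh_eq_exp_two_mul, h4]
  set u := exp (2 * x)
  have hu : 0 < u := exp_pos _
  have hden : 1 - (u - 1) / (u + 1) + ((u - 1) / (u + 1)) ^ 2 = (u ^ 2 + 3) / (u + 1) ^ 2 := by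
    field_simp
    ring
  rw [hden]
  field_simp
  ring

theorem sq_lt_div_one_sub_add_sq {t : ℝ} (h0 : 0 < t) (h1 : t < 1) :
    t ^ 2 < t / (1 - t + t ^ 2) := by
  have hd : 0 < 1 - t + t ^ 2 := by nlinarith
  rw [lt_div_iff₀ hd]
  nlinarith [mul_pos (mul_pos h0 (sub_pos.mpr h1)) (add_pos_of_pos_of_nonneg one_pos (sq_nonneg t))]

theorem div_one_sub_add_sq_lt_add_sq {t : ℝ} (h0 : 0 < t) :
    t / (1 - t + t ^ 2) < t + t ^ 2 := by
  have hd : 0 < 1 - t + t ^ 2 := by nlinarith [sq_nonneg (t - 1 / 2)]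
  rw [div_lt_iff₀ hd]
  nlinarith [pow_pos h0 4]

/-- For every `θ > 0`, `1 − 4/(e^{4θ}+3) > tanh²(θ)` (equivalently
`(e^{4θ}−1)/(e^{4θ}+3) > tanh²(θ)`); hence the symmetric KL divergence
`2θ(1 − 4(e^{4θ}+3)⁻¹ − tanh²(θ))` between distinct graphs in the weak supervision Ising
ensemble is strictly positive, but strictly smaller than the supervised-case divergence
`2θ tanh(θ)`. -/
theorem ising_divergence_positive_but_smaller (θ : ℝ) (hθ : 0 < θ) :
    1 - 4 / (Real.exp (4 * θ) + 3) > Real.tanh θ ^ 2 ∧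
    (Real.exp (4 * θ) - 1) / (Real.exp (4 * θ) + 3) > Real.tanh θ ^ 2 ∧
    0 < 2 * θ * (1 - 4 * (Real.exp (4 * θ) + 3)⁻¹ - Real.tanh θ ^ 2) ∧
    2 * θ * (1 - 4 * (Real.exp (4 * θ) + 3)⁻¹ - Real.tanh θ ^ 2) < 2 * θ * Real.tanh θ := by
  have hdiff : (exp (4 * θ) - 1) / (exp (4 * θ) + 3) = 1 - 4 / (exp (4 * θ) + 3) := by
    have : exp (4 * θ) + 3 ≠ 0 := by positivity
    field_simp
    ring
  have ht := tanh_pos_of_pos hθ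
  have hlow : tanh θ ^ 2 < 1 - 4 / (exp (4 * θ) + 3) := by
    rw [one_sub_four_div_exp_four_mul_add_three]
    exact sq_lt_div_one_sub_add_sq ht (tanh_lt_one θ)
  have hup : 1 - 4 / (exp (4 * θ) + 3) - tanh θ ^ 2 < tanh θ := by
    rw [one_sub_four_div_exp_four_mul_add_three]
    linarith [div_one_sub_add_sq_lt_add_sq ht]
  rw [hdiff, ← div_eq_mul_inv]
  have h2θ : 0 < 2 * θ := by linarith
  exact ⟨hlow, hlow, mul_pos h2θ (sub_pos.mpr hlow), mul_lt_mul_of_pos_left hup h2θ⟩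
end
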